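/- arXiv:1610.01857 — 2 statements merged into one kernel-verified Lean document; each statement's English description precedes it below -/
import Mathlib

section
/- Let P be an n×n row-stochastic matrix and let p ∈ ℝⁿ be a strictly positive stationary vector (pᵀ P = pᵀ). Let ℒ = I − (Π^{1/2} P Π^{-1/2} + Π^{-1/2} Pᵀ Π^{1/2})/2 be the directed graph Laplacian. Then for every z ∈ ℝⁿ, writing y_i = z_i / √(p_i), one has zᵀ ℒ z = (1/2) Σ_{i,j} p_i P_{ij} (y_i − y_j)². -/
/-!
Substituting `z = √p · y`, the diagonal conjugations cancel and both halves of the symmetrised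
operator contribute the same bilinear form, so `zᵀ ℒ z = ∑ᵢ pᵢ yᵢ² - ∑ᵢⱼ pᵢ Pᵢⱼ yᵢ yⱼ`.
Expanding the square on the right-hand side, the row sums of `P` and the stationarity of `p`
turn each of the two squared terms into `∑ᵢ pᵢ yᵢ²`.
-/

open Matrix

variable {ι : Type*} [Fintype ι]

theorem dotProduct_transpose_mulVec_self {R : Type*} [CommSemiring R] (M : Matrix ι ι R)
    (z : ι → R) : z ⬝ᵥ Mᵀ *ᵥ z = z ⬝ᵥ M *ᵥ z := by
  rw [mulVec_transpose, dotProduct_comm, dotProduct_mulVec]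

theorem dotProduct_mulVec_one_sub_symm {K : Type*} [Field K] [NeZero (2 : K)] [DecidableEq ι]
    (M : Matrix ι ι K) (z : ι → K) :
    z ⬝ᵥ (1 - (1 / 2 : K) • (M + Mᵀ)) *ᵥ z = z ⬝ᵥ z - z ⬝ᵥ M *ᵥ z := by
  have h2 : (2 : K) ≠ 0 := two_ne_zero
  rw [sub_mulVec, one_mulVec, smul_mulVec, add_mulVec, dotProduct_sub, dotProduct_smul,
    dotProduct_add, dotProduct_transpose_mulVec_self, smul_eq_mul]
  field_simp
  ring

theorem dotProduct_diagonal_mul_mulVec_diagonal_inv {K : Type*} [Field K] [DecidableEq ι]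
    (P : Matrix ι ι K) {d : ι → K} (hd : ∀ i, d i ≠ 0) (y : ι → K) :
    (d * y) ⬝ᵥ (diagonal d * P * diagonal d⁻¹) *ᵥ (d * y) = (d * d * y) ⬝ᵥ P *ᵥ y := by
  have hinv : diagonal d⁻¹ *ᵥ (d * y) = y := by
    ext i
    simp [mulVec_diagonal, hd i]
  have hvec : (d * y) ᵥ* diagonal d = d * d * y := by
    ext i
    simp only [vecMul_diagonal, Pi.mul_apply]
    ring
  rw [← mulVec_mulVec, hinv, ← mulVec_mulVec, dotProduct_mulVec, hvec]

theorem dotProduct_mulVec_one_sub_symm_conj_diagonal {K : Type*} [Field K] [NeZero (2 : K)]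
    [DecidableEq ι] (P : Matrix ι ι K) {d : ι → K} (hd : ∀ i, d i ≠ 0) (y : ι → K) :
    (d * y) ⬝ᵥ (1 - (1 / 2 : K) • (diagonal d * P * diagonal d⁻¹
      + (diagonal d * P * diagonal d⁻¹)ᵀ)) *ᵥ (d * y)
      = (d * d * y) ⬝ᵥ y - (d * d * y) ⬝ᵥ P *ᵥ y := by
  have hself : (d * y) ⬝ᵥ (d * y) = (d * d * y) ⬝ᵥ y := by
    simp only [dotProduct, Pi.mul_apply]
    exact Finset.sum_congr rfl fun i _ => by ring
  rw [dotProduct_mulVec_one_sub_symm, hself, dotProduct_diagonal_mul_mulVec_diagonal_inv P hd]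

theorem sum_mul_sq_sub_eq_of_stationary {R : Type*} [CommRing R] {P : Matrix ι ι R}
    {p : ι → R} (hrow : P *ᵥ (fun _ => 1) = fun _ => 1) (hstat : p ᵥ* P = p) (y : ι → R) :
    ∑ i, ∑ j, p i * P i j * (y i - y j) ^ 2 = 2 * ((p * y) ⬝ᵥ y - (p * y) ⬝ᵥ P *ᵥ y) := by
  have hrow' (i : ι) : ∑ j, P i j = 1 := by
    simpa [mulVec, dotProduct] using congrFun hrow i
  have hstat' (j : ι) : ∑ i, p i * P i j = p j := by
    simpa [vecMul, dotProduct] using congrFun hstat j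
  have hleft : ∑ i, ∑ j, p i * P i j * y i ^ 2 = (p * y) ⬝ᵥ y := by
    refine Finset.sum_congr rfl fun i _ => ?_
    rw [← Finset.sum_mul, ← Finset.mul_sum, hrow' i, Pi.mul_apply]
    ring
  have hright : ∑ i, ∑ j, p i * P i j * y j ^ 2 = (p * y) ⬝ᵥ y := by
    rw [Finset.sum_comm]
    refine Finset.sum_congr rfl fun j _ => ?_
    rw [← Finset.sum_mul, hstat' j, Pi.mul_apply]
    ring
  have hcross : ∑ i, ∑ j, p i * P i j * (y i * y j) = (p * y) ⬝ᵥ P *ᵥ y := by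
    simp only [dotProduct, mulVec, Finset.mul_sum, Pi.mul_apply]
    refine Finset.sum_congr rfl fun i _ => Finset.sum_congr rfl fun j _ => ?_
    ring
  have hexpand (i j : ι) : p i * P i j * (y i - y j) ^ 2
      = p i * P i j * y i ^ 2 + p i * P i j * y j ^ 2 - 2 * (p i * P i j * (y i * y j)) := by
    ring
  simp only [hexpand, Finset.sum_sub_distrib, Finset.sum_add_distrib, ← Finset.mul_sum,
    hleft, hright, hcross]
  ring

theorem stmt_14_general (n : ℕ) (P : Matrix (Fin n) (Fin n) ℝ)
    (hProw : P.mulVec (fun _ => (1 : ℝ)) = fun _ => (1 : ℝ))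
    (p : Fin n → ℝ) (hp : ∀ i, 0 < p i) (hstat : Matrix.vecMul p P = p)
    (Pihalf Piinvhalf : Matrix (Fin n) (Fin n) ℝ)
    (hPihalf : Pihalf = Matrix.diagonal (fun i => Real.sqrt (p i)))
    (hPiinvhalf : Piinvhalf = Matrix.diagonal (fun i => (Real.sqrt (p i))⁻¹))
    (L : Matrix (Fin n) (Fin n) ℝ)
    (hL : L = 1 - (1 / 2 : ℝ) • (Pihalf * P * Piinvhalf + Piinvhalf * Pᵀ * Pihalf))
    (z y : Fin n → ℝ) (hy : y = fun i => z i / Real.sqrt (p i)) :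
    z ⬝ᵥ L.mulVec z = (1 / 2) * ∑ i, ∑ j, p i * P i j * (y i - y j) ^ 2 := by
  set d : Fin n → ℝ := fun i => Real.sqrt (p i)
  have hd (i : Fin n) : d i ≠ 0 := (Real.sqrt_pos.2 (hp i)).ne'
  have hdd : d * d = p := funext fun i => Real.mul_self_sqrt (hp i).le
  have hz : z = d * y := by
    rw [hy]
    ext i
    exact (mul_div_cancel₀ _ (hd i)).symm
  have hsymm : Piinvhalf * Pᵀ * Pihalf = (Pihalf * P * Piinvhalf)ᵀ := by
    simp [hPihalf, hPiinvhalf, transpose_mul, Matrix.mul_assoc]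
  have hinv : Piinvhalf = diagonal d⁻¹ := hPiinvhalf
  rw [hL, hsymm, hPihalf, hinv, hz, dotProduct_mulVec_one_sub_symm_conj_diagonal P hd, hdd,
    sum_mul_sq_sub_eq_of_stationary hProw hstat]
  ring

/-- Quadratic form of the directed graph Laplacian: for `y i = z i / √(p i)`,
`zᵀ ℒ z = (1/2) ∑_{i,j} p i * P i j * (y i - y j)²`. -/
theorem stmt_14 (n : ℕ) (P : Matrix (Fin n) (Fin n) ℝ)
    (hPnn : ∀ i j, 0 ≤ P i j) (hProw : P.mulVec (fun _ => (1 : ℝ)) = fun _ => (1 : ℝ))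
    (p : Fin n → ℝ) (hp : ∀ i, 0 < p i) (hstat : Matrix.vecMul p P = p)
    (Pihalf Piinvhalf : Matrix (Fin n) (Fin n) ℝ)
    (hPihalf : Pihalf = Matrix.diagonal (fun i => Real.sqrt (p i)))
    (hPiinvhalf : Piinvhalf = Matrix.diagonal (fun i => (Real.sqrt (p i))⁻¹))
    (L : Matrix (Fin n) (Fin n) ℝ)
    (hL : L = 1 - (1 / 2 : ℝ) • (Pihalf * P * Piinvhalf + Piinvhalf * Pᵀ * Pihalf))
    (z y : Fin n → ℝ) (hy : y = fun i => z i / Real.sqrt (p i)) :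
    z ⬝ᵥ L.mulVec z = (1 / 2) * ∑ i, ∑ j, p i * P i j * (y i - y j) ^ 2 :=
  stmt_14_general n P hProw p hp hstat Pihalf Piinvhalf hPihalf hPiinvhalf L hL z y hy
end

section
/- Let P be an n×n row-stochastic matrix (nonnegative entries, each row sums to 1) and let p ∈ ℝⁿ be a strictly positive stationary vector (pᵀ P = pᵀ). Then the directed graph Laplacian ℒ = I − (Π^{1/2} P Π^{-1/2} + Π^{-1/2} Pᵀ Π^{1/2})/2 is positive semidefinite: zᵀ ℒ z ≥ 0 for all z ∈ ℝⁿ. -/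
/-!
Substituting `z = Π^{1/2} x` turns the quadratic form of `ℒ` into
`∑ᵢ pᵢ xᵢ² - ∑ᵢⱼ pᵢ Pᵢⱼ xᵢ xⱼ`. Because the rows of `P` sum to one and `p` is stationary,
this equals the Dirichlet form `½ ∑ᵢⱼ pᵢ Pᵢⱼ (xᵢ - xⱼ)²`, a sum of nonnegative terms.
-/

open Matrix

namespace Matrix

variable {ι R : Type*} [Fintype ι]

theorem two_mul_dotProduct_sub_dotProduct_mulVec_eq_sum [CommRing R] {P : Matrix ι ι R}
    {p : ι → R} (hrow : P *ᵥ (fun _ => 1) = fun _ => 1) (hstat : p ᵥ* P = p) (x : ι → R) :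
    2 * ((p * x) ⬝ᵥ x - (p * x) ⬝ᵥ P *ᵥ x) = ∑ i, ∑ j, p i * P i j * (x i - x j) ^ 2 := by
  have hrow' : ∀ i, ∑ j, P i j = 1 := fun i => by
    simpa [mulVec, dotProduct] using congrFun hrow i
  have hstat' : ∀ j, ∑ i, p i * P i j = p j := fun j => by
    simpa [vecMul, dotProduct] using congrFun hstat j
  have hleft : ∑ i, ∑ j, p i * P i j * x i ^ 2 = ∑ i, p i * x i ^ 2 := by
    simp_rw [← Finset.sum_mul, ← Finset.mul_sum, hrow', mul_one]
  have hright : ∑ i, ∑ j, p i * P i j * x j ^ 2 = ∑ j, p j * x j ^ 2 := by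
    rw [Finset.sum_comm]
    simp_rw [← Finset.sum_mul, hstat']
  have hcross : (p * x) ⬝ᵥ P *ᵥ x = ∑ i, ∑ j, p i * P i j * (x i * x j) := by
    simp only [dotProduct, mulVec, Pi.mul_apply, Finset.mul_sum]
    exact Finset.sum_congr rfl fun i _ => Finset.sum_congr rfl fun j _ => by ring
  have hsq : (p * x) ⬝ᵥ x = ∑ i, p i * x i ^ 2 := by
    simp only [dotProduct, Pi.mul_apply, sq, mul_assoc]
  have hexpand : ∑ i, ∑ j, p i * P i j * (x i - x j) ^ 2 = ∑ i, ∑ j, p i * P i j * x i ^ 2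
      - 2 * ∑ i, ∑ j, p i * P i j * (x i * x j) + ∑ i, ∑ j, p i * P i j * x j ^ 2 := by
    simp only [Finset.mul_sum, ← Finset.sum_sub_distrib, ← Finset.sum_add_distrib]
    exact Finset.sum_congr rfl fun i _ => Finset.sum_congr rfl fun j _ => by ring
  rw [hexpand, hleft, hright, hcross, hsq]
  ring

theorem dotProduct_mulVec_le_dotProduct_of_vecMul_eq [CommRing R] [LinearOrder R]
    [IsStrictOrderedRing R] {P : Matrix ι ι R} (hP : ∀ i j, 0 ≤ P i j) {p : ι → R}
    (hp : ∀ i, 0 ≤ p i) (hrow : P *ᵥ (fun _ => 1) = fun _ => 1) (hstat : p ᵥ* P = p)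
    (x : ι → R) : (p * x) ⬝ᵥ P *ᵥ x ≤ (p * x) ⬝ᵥ x := by
  have hsum : 0 ≤ 2 * ((p * x) ⬝ᵥ x - (p * x) ⬝ᵥ P *ᵥ x) := by
    rw [two_mul_dotProduct_sub_dotProduct_mulVec_eq_sum hrow hstat]
    exact Finset.sum_nonneg fun i _ => Finset.sum_nonneg fun j _ =>
      mul_nonneg (mul_nonneg (hp i) (hP i j)) (sq_nonneg _)
  exact sub_nonneg.mp (nonneg_of_mul_nonneg_right hsum two_pos)

theorem dotProduct_mulVec_one_sub_half_smul_add_transpose [DecidableEq ι] [Field R]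
    [NeZero (2 : R)] (A : Matrix ι ι R) (z : ι → R) :
    z ⬝ᵥ (1 - (1 / 2 : R) • (A + Aᵀ)) *ᵥ z = z ⬝ᵥ z - z ⬝ᵥ A *ᵥ z := by
  have htranspose : z ⬝ᵥ Aᵀ *ᵥ z = z ⬝ᵥ A *ᵥ z := by
    rw [dotProduct_mulVec, vecMul_transpose, dotProduct_comm]
  rw [sub_mulVec, dotProduct_sub, one_mulVec, smul_mulVec, dotProduct_smul, add_mulVec,
    dotProduct_add, htranspose, smul_eq_mul]
  field_simp
  ring

theorem dotProduct_diagonal_mul_mul_diagonal_inv_mulVec [DecidableEq ι] [Field R]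
    (P : Matrix ι ι R) {s : ι → R} (hs : ∀ i, s i ≠ 0) (x : ι → R) :
    (s * x) ⬝ᵥ (diagonal s * P * diagonal (fun i => (s i)⁻¹)) *ᵥ (s * x)
      = (s * s * x) ⬝ᵥ P *ᵥ x := by
  simp only [dotProduct, mulVec, diagonal_mul, mul_diagonal, Pi.mul_apply, Finset.mul_sum]
  refine Finset.sum_congr rfl fun i _ => Finset.sum_congr rfl fun j _ => ?_
  field_simp [hs j]

end Matrix

/-- The directed graph Laplacian of a row-stochastic matrix with strictly positive
stationary vector is positive semidefinite. -/
theorem stmt_15 (n : ℕ) (P : Matrix (Fin n) (Fin n) ℝ)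
    (hPnn : ∀ i j, 0 ≤ P i j) (hProw : P.mulVec (fun _ => (1 : ℝ)) = fun _ => (1 : ℝ))
    (p : Fin n → ℝ) (hp : ∀ i, 0 < p i) (hstat : Matrix.vecMul p P = p)
    (Pihalf Piinvhalf : Matrix (Fin n) (Fin n) ℝ)
    (hPihalf : Pihalf = Matrix.diagonal (fun i => Real.sqrt (p i)))
    (hPiinvhalf : Piinvhalf = Matrix.diagonal (fun i => (Real.sqrt (p i))⁻¹))
    (L : Matrix (Fin n) (Fin n) ℝ)
    (hL : L = 1 - (1 / 2 : ℝ) • (Pihalf * P * Piinvhalf + Piinvhalf * Pᵀ * Pihalf)) :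
    ∀ z : Fin n → ℝ, 0 ≤ z ⬝ᵥ L.mulVec z := by
  intro z
  subst hL hPihalf hPiinvhalf
  set s : Fin n → ℝ := fun i => Real.sqrt (p i)
  have hs : ∀ i, s i ≠ 0 := fun i => (Real.sqrt_pos.mpr (hp i)).ne'
  have hss : s * s = p := funext fun i => Real.mul_self_sqrt (hp i).le
  obtain ⟨x, rfl⟩ : ∃ x, z = s * x := ⟨z / s, funext fun i => (mul_div_cancel₀ _ (hs i)).symm⟩
  have htranspose : diagonal (fun i => (s i)⁻¹) * Pᵀ * diagonal s
      = (diagonal s * P * diagonal fun i => (s i)⁻¹)ᵀ := by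
    simp only [transpose_mul, diagonal_transpose, mul_assoc]
  have hnorm : (s * x) ⬝ᵥ (s * x) = (s * s * x) ⬝ᵥ x := by
    simp only [dotProduct, Pi.mul_apply]
    exact Finset.sum_congr rfl fun i _ => by ring
  rw [htranspose, dotProduct_mulVec_one_sub_half_smul_add_transpose,
    dotProduct_diagonal_mul_mul_diagonal_inv_mulVec P hs, hnorm, hss, sub_nonneg]
  exact dotProduct_mulVec_le_dotProduct_of_vecMul_eq hPnn (fun i => (hp i).le) hProw hstat x
end
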